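/- Let G be a real r×n matrix and H a real n×l matrix with r < l < n, and suppose the product GH has full rank r. Let Q be an r×n matrix with orthonormal rows whose row space equals the row space of G. Then σ_r(QH) ≥ σ_r(GH)/σ_1(G). -/

import Mathlib

open Matrix MeasureTheory ProbabilityTheory Real
open scoped BigOperators ENNReal

noncomputable section

namespace LRA

/-- The `j`-th largest singular value (1-indexed) of a real `m × n` matrix;
by convention it is `0` for `j = 0` or `j > n`. -/
noncomputable def sval {m n : ℕ} (A : Matrix (Fin m) (Fin n) ℝ) (j : ℕ) : ℝ :=
  if hj : 1 ≤ j ∧ j ≤ n then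
    Real.sqrt ((by simpa using Matrix.isHermitian_conjTranspose_mul_self A : (Aᵀ * A).IsHermitian).eigenvalues
      (Tuple.sort (by simpa using Matrix.isHermitian_conjTranspose_mul_self A : (Aᵀ * A).IsHermitian).eigenvalues
        (Fin.rev ⟨j - 1, by omega⟩)))
  else 0

/-- Spectral norm: the largest singular value. -/
noncomputable def specNorm {m n : ℕ} (A : Matrix (Fin m) (Fin n) ℝ) : ℝ := sval A 1

/-- Frobenius norm. -/
noncomputable def frobNorm {m n : ℕ} (A : Matrix (Fin m) (Fin n) ℝ) : ℝ :=
  Real.sqrt (∑ i, ∑ j, (A i j) ^ 2)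

/-- The optimal Frobenius rank-`r` approximation error `(∑_{j>r} σ_j(A)²)^{1/2}`. -/
noncomputable def frobTail {m n : ℕ} (A : Matrix (Fin m) (Fin n) ℝ) (r : ℕ) : ℝ :=
  Real.sqrt (∑ j ∈ Finset.Ioc r n, sval A j ^ 2)

/-- The four Penrose conditions. -/
def IsMoorePenrose {m n : ℕ} (A : Matrix (Fin m) (Fin n) ℝ)
    (B : Matrix (Fin n) (Fin m) ℝ) : Prop :=
  A * B * A = A ∧ B * A * B = B ∧ (A * B)ᵀ = A * B ∧ (B * A)ᵀ = B * A

open scoped Classical in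
/-- The Moore–Penrose pseudoinverse. -/
noncomputable def pinv {m n : ℕ} (A : Matrix (Fin m) (Fin n) ℝ) :
    Matrix (Fin n) (Fin m) ℝ :=
  if h : ∃ B, IsMoorePenrose A B then h.choose else 0

/-- The `r`-projective volume `∏_{j=1}^r σ_j(A)`. -/
noncomputable def pvol {m n : ℕ} (r : ℕ) (A : Matrix (Fin m) (Fin n) ℝ) : ℝ :=
  ∏ j ∈ Finset.Icc 1 r, sval A j

instance matrixMeasurableSpace {p q : ℕ} : MeasurableSpace (Matrix (Fin p) (Fin q) ℝ) :=
  MeasurableSpace.pi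

/-- A random matrix all of whose entries are i.i.d. standard normal random variables. -/
def IsGaussianMatrix {Ω : Type*} [MeasurableSpace Ω] (μ : Measure Ω) {p q : ℕ}
    (G : Ω → Matrix (Fin p) (Fin q) ℝ) : Prop :=
  Measurable G ∧
  iIndepFun (m := fun _ : Fin p × Fin q => (inferInstance : MeasurableSpace ℝ))
    (fun ij ω => G ω ij.1 ij.2) μ ∧
  ∀ i j, Measure.map (fun ω => G ω i j) μ = gaussianReal 0 1

/-- The `k × l` submatrix of `W` with rows indexed by `I` and columns by `J`. -/
noncomputable def subm {m n k l : ℕ} (W : Matrix (Fin m) (Fin n) ℝ)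
    {I : Finset (Fin m)} {J : Finset (Fin n)} (hI : I.card = k) (hJ : J.card = l) :
    Matrix (Fin k) (Fin l) ℝ :=
  W.submatrix (fun i => ((I.orderIsoOfFin hI i : I) : Fin m))
    (fun j => ((J.orderIsoOfFin hJ j : J) : Fin n))

/-! The rows of `G` lie in the row space of `Q` and `Q Qᵀ = 1`, so `G = G QᵀQ` and
`G H x = G Qᵀ (Q H x)`; as `Qᵀ` is an isometry, `‖G H x‖ ≤ σ₁(G) ‖Q H x‖` for every `x`.
A pointwise bound `‖B x‖ ≤ c ‖C x‖` gives `σ_k(B) ≤ c σ_k(C)` by the Courant–Fischer argument: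
the span of the eigenvectors of `BᵀB` for its `k` largest eigenvalues meets the span of those of
`CᵀC` for its `q - k + 1` smallest ones in a nonzero vector `x`, and comparing `‖B x‖²` with
`‖C x‖²` on it compares the two `k`-th eigenvalues. -/

open scoped RealInnerProductSpace

lemma _root_.Submodule.exists_ne_zero_mem_inf_of_finrank_lt {K V : Type*} [DivisionRing K]
    [AddCommGroup V] [Module K V] [FiniteDimensional K V] {W₁ W₂ : Submodule K V}
    (h : Module.finrank K V < Module.finrank K W₁ + Module.finrank K W₂) :
    ∃ x ∈ W₁ ⊓ W₂, x ≠ 0 := by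
  have hsup := Submodule.finrank_le (W₁ ⊔ W₂)
  have hinf := Submodule.finrank_sup_add_finrank_inf_eq W₁ W₂
  exact (Submodule.ne_bot_iff _).mp fun hbot => by
    rw [hbot, finrank_bot] at hinf; omega

section Eigenbasis

variable {E : Type*} [NormedAddCommGroup E] [InnerProductSpace ℝ E] {ι : Type*} [Fintype ι]
  {T : E →ₗ[ℝ] E} {b : OrthonormalBasis ι ℝ E} {μ : ι → ℝ}

lemma inner_map_self_eq_sum_of_eigenbasis (hb : ∀ j, T (b j) = μ j • b j) (x : E) :
    ⟪x, T x⟫ = ∑ j, μ j * ⟪b j, x⟫ ^ 2 := by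
  nth_rw 2 [← b.sum_repr' x]
  simp only [map_sum, map_smul, hb, smul_smul, inner_sum, inner_smul_right, real_inner_comm x]
  exact Finset.sum_congr rfl fun j _ => by ring

lemma inner_eq_zero_of_mem_span_image {s : Set ι} {x : E} (hx : x ∈ Submodule.span ℝ (b '' s))
    {j : ι} (hj : j ∉ s) : ⟪b j, x⟫ = 0 := by
  suffices Submodule.span ℝ (b '' s) ≤ LinearMap.ker (innerₛₗ ℝ (b j)) from this hx
  rw [Submodule.span_le]
  rintro _ ⟨i, hi, rfl⟩
  exact b.inner_eq_zero fun h => hj (h ▸ hi)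

lemma finrank_span_image_eq_card (s : Finset ι) :
    Module.finrank ℝ (Submodule.span ℝ (b '' s)) = s.card := by
  rw [Set.image_eq_range]
  exact (finrank_span_eq_card (b.orthonormal.linearIndependent.comp _ Subtype.val_injective)).trans
    (Fintype.card_coe s)

lemma inner_map_self_le_mul_norm_sq (hb : ∀ j, T (b j) = μ j • b j) {s : Set ι} {t : ℝ}
    (hμ : ∀ j ∈ s, μ j ≤ t) {x : E} (hx : ∀ j ∉ s, ⟪b j, x⟫ = 0) :
    ⟪x, T x⟫ ≤ t * ‖x‖ ^ 2 := by
  rw [inner_map_self_eq_sum_of_eigenbasis hb, ← b.sum_sq_inner_right, Finset.mul_sum]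
  refine Finset.sum_le_sum fun j _ => ?_
  by_cases hj : j ∈ s
  · exact mul_le_mul_of_nonneg_right (hμ j hj) (sq_nonneg _)
  · simp [hx j hj]

lemma mul_norm_sq_le_inner_map_self (hb : ∀ j, T (b j) = μ j • b j) {s : Set ι} {t : ℝ}
    (hμ : ∀ j ∈ s, t ≤ μ j) {x : E} (hx : ∀ j ∉ s, ⟪b j, x⟫ = 0) :
    t * ‖x‖ ^ 2 ≤ ⟪x, T x⟫ := by
  rw [inner_map_self_eq_sum_of_eigenbasis hb, ← b.sum_sq_inner_right, Finset.mul_sum]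
  refine Finset.sum_le_sum fun j _ => ?_
  by_cases hj : j ∈ s
  · exact mul_le_mul_of_nonneg_right (hμ j hj) (sq_nonneg _)
  · simp [hx j hj]

theorem eigenvalue_le_mul_of_inner_map_self_le {m : ℕ} {S T : E →ₗ[ℝ] E}
    {bS bT : OrthonormalBasis (Fin m) ℝ E} {μS μT : Fin m → ℝ}
    (hbS : ∀ j, S (bS j) = μS j • bS j) (hbT : ∀ j, T (bT j) = μT j • bT j)
    (hμS : Monotone μS) (hμT : Monotone μT) {c : ℝ} (hc : 0 ≤ c)
    (hST : ∀ x, ⟪x, S x⟫ ≤ c * ⟪x, T x⟫) (i : Fin m) : μS i ≤ c * μT i := by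
  have : FiniteDimensional ℝ E := bS.toBasis.finiteDimensional_of_finite
  obtain ⟨x, ⟨hxS, hxT⟩, hx0⟩ := Submodule.exists_ne_zero_mem_inf_of_finrank_lt
    (W₁ := Submodule.span ℝ (bS '' (Finset.Ici i : Finset (Fin m))))
    (W₂ := Submodule.span ℝ (bT '' (Finset.Iic i : Finset (Fin m)))) (by
      rw [finrank_span_image_eq_card, finrank_span_image_eq_card, Fin.card_Ici, Fin.card_Iic,
        Module.finrank_eq_card_basis bS.toBasis, Fintype.card_fin]
      omega)
  have hlow : μS i * ‖x‖ ^ 2 ≤ ⟪x, S x⟫ :=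
    mul_norm_sq_le_inner_map_self hbS (fun j hj => hμS (by simpa using hj))
      fun j hj => inner_eq_zero_of_mem_span_image hxS hj
  have hup : ⟪x, T x⟫ ≤ μT i * ‖x‖ ^ 2 :=
    inner_map_self_le_mul_norm_sq hbT (fun j hj => hμT (by simpa using hj))
      fun j hj => inner_eq_zero_of_mem_span_image hxT hj
  refine le_of_mul_le_mul_right ?_ (by positivity : 0 < ‖x‖ ^ 2)
  calc μS i * ‖x‖ ^ 2 ≤ ⟪x, S x⟫ := hlow
    _ ≤ c * ⟪x, T x⟫ := hST x
    _ ≤ c * (μT i * ‖x‖ ^ 2) := by gcongr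
    _ = c * μT i * ‖x‖ ^ 2 := by ring

end Eigenbasis

lemma isHermitian_transpose_mul_self {ι κ : Type*} [Fintype κ] (A : Matrix κ ι ℝ) :
    (Aᵀ * A).IsHermitian := by
  simpa using isHermitian_conjTranspose_mul_self A

section Matrix

variable {ι κ : Type*} [Fintype ι] [DecidableEq ι] [Fintype κ] [DecidableEq κ]

lemma inner_toEuclideanLin_transpose_mul_self (A : Matrix κ ι ℝ) (x : EuclideanSpace ℝ ι) :
    ⟪x, (Aᵀ * A).toEuclideanLin x⟫ = ‖A.toEuclideanLin x‖ ^ 2 := by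
  rw [toLpLin_mul_same, LinearMap.comp_apply, ← conjTranspose_eq_transpose_of_trivial,
    toEuclideanLin_conjTranspose_eq_adjoint, LinearMap.adjoint_inner_right,
    real_inner_self_eq_norm_sq]

lemma norm_toEuclideanLin_transpose_of_mul_transpose_eq_one {Q : Matrix κ ι ℝ}
    (hQ : Q * Qᵀ = 1) (w : EuclideanSpace ℝ κ) : ‖Qᵀ.toEuclideanLin w‖ = ‖w‖ := by
  have h := inner_toEuclideanLin_transpose_mul_self Qᵀ w
  rw [transpose_transpose, hQ, toLpLin_one, LinearMap.id_apply, real_inner_self_eq_norm_sq] at h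
  exact (pow_left_inj₀ (norm_nonneg _) (norm_nonneg _) two_ne_zero).mp h.symm

lemma toEuclideanLin_eigenvectorBasis {A : Matrix ι ι ℝ} (hA : A.IsHermitian) (j : ι) :
    A.toEuclideanLin (hA.eigenvectorBasis j) = hA.eigenvalues j • hA.eigenvectorBasis j :=
  WithLp.ofLp_injective 2 (hA.mulVec_eigenvectorBasis j)

end Matrix

lemma toEuclideanLin_reindex_sort_eigenvectorBasis {m : ℕ} {A : Matrix (Fin m) (Fin m) ℝ}
    (hA : A.IsHermitian) (j : Fin m) :
    A.toEuclideanLin (hA.eigenvectorBasis.reindex (Tuple.sort hA.eigenvalues).symm j) =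
      (hA.eigenvalues ∘ Tuple.sort hA.eigenvalues) j •
        hA.eigenvectorBasis.reindex (Tuple.sort hA.eigenvalues).symm j := by
  simpa using toEuclideanLin_eigenvectorBasis hA _

lemma mul_transpose_mul_eq_self_of_span_le {R ι κ ν : Type*} [CommSemiring R] [Fintype κ]
    [DecidableEq κ] [Fintype ι] {G : Matrix ν ι R} {Q : Matrix κ ι R} (hQ : Q * Qᵀ = 1)
    (h : Submodule.span R (Set.range G) ≤ Submodule.span R (Set.range Q)) :
    G * (Qᵀ * Q) = G := by
  have hrows : ∀ i, ∃ c : κ → R, ∑ k, c k • Q k = G i := fun i =>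
    (Submodule.mem_span_range_iff_exists_fun R).mp (h (Submodule.subset_span ⟨i, rfl⟩))
  choose C hC using hrows
  have hGC : G = Matrix.of C * Q := by
    ext i j
    simp [← hC i, mul_apply, Finset.sum_apply]
  rw [hGC, Matrix.mul_assoc, ← Matrix.mul_assoc Q, hQ, Matrix.one_mul]

lemma sval_nonneg {p q : ℕ} (A : Matrix (Fin p) (Fin q) ℝ) (j : ℕ) : 0 ≤ sval A j := by
  unfold sval
  split_ifs
  exacts [Real.sqrt_nonneg _, le_rfl]

lemma sval_eq_sqrt {p q : ℕ} (A : Matrix (Fin p) (Fin q) ℝ) {j : ℕ} (hj : 1 ≤ j ∧ j ≤ q)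
    (hA : (Aᵀ * A).IsHermitian) :
    sval A j = √((hA.eigenvalues ∘ Tuple.sort hA.eigenvalues) (Fin.rev ⟨j - 1, by omega⟩)) := by
  rw [sval, dif_pos hj]
  rfl

theorem sval_le_mul_of_norm_le {p p' q : ℕ} {B : Matrix (Fin p) (Fin q) ℝ}
    {C : Matrix (Fin p') (Fin q) ℝ} {c : ℝ} (hc : 0 ≤ c)
    (hBC : ∀ x, ‖B.toEuclideanLin x‖ ≤ c * ‖C.toEuclideanLin x‖) (k : ℕ) :
    sval B k ≤ c * sval C k := by
  by_cases hk : 1 ≤ k ∧ k ≤ q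
  · have hB := isHermitian_transpose_mul_self B
    have hC := isHermitian_transpose_mul_self C
    rw [sval_eq_sqrt B hk hB, sval_eq_sqrt C hk hC, ← Real.sqrt_sq hc,
      ← Real.sqrt_mul (sq_nonneg c)]
    refine Real.sqrt_le_sqrt (eigenvalue_le_mul_of_inner_map_self_le
      (toEuclideanLin_reindex_sort_eigenvectorBasis hB)
      (toEuclideanLin_reindex_sort_eigenvectorBasis hC)
      (Tuple.monotone_sort _) (Tuple.monotone_sort _) (sq_nonneg c) (fun x => ?_) _)
    rw [inner_toEuclideanLin_transpose_mul_self, inner_toEuclideanLin_transpose_mul_self,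
      ← mul_pow]
    exact pow_le_pow_left₀ (norm_nonneg _) (hBC x) 2
  · simp [sval, hk]

theorem norm_toEuclideanLin_le_sval_one {p q : ℕ} (A : Matrix (Fin p) (Fin q) ℝ)
    (x : EuclideanSpace ℝ (Fin q)) : ‖A.toEuclideanLin x‖ ≤ sval A 1 * ‖x‖ := by
  rcases Nat.eq_zero_or_pos q with rfl | hq
  · simp [Subsingleton.elim x 0]
  have hA := isHermitian_transpose_mul_self A
  rw [sval_eq_sqrt A ⟨le_rfl, hq⟩ hA, ← Real.sqrt_sq (norm_nonneg (A.toEuclideanLin x)),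
    ← Real.sqrt_sq (norm_nonneg x), ← Real.sqrt_mul' _ (sq_nonneg _)]
  refine Real.sqrt_le_sqrt ?_
  rw [← inner_toEuclideanLin_transpose_mul_self]
  refine inner_map_self_le_mul_norm_sq (toEuclideanLin_reindex_sort_eigenvectorBasis hA)
    (s := Set.univ) (fun j _ => Tuple.monotone_sort _ ?_) (fun j hj => absurd trivial hj)
  simp only [Fin.le_def, Fin.val_rev, Nat.sub_self]
  omega

theorem least_singular_value_of_orthonormalized_product_general {r n l : ℕ}
    (G : Matrix (Fin r) (Fin n) ℝ) (H : Matrix (Fin n) (Fin l) ℝ)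
    (Q : Matrix (Fin r) (Fin n) ℝ) (hQ : Q * Qᵀ = 1)
    (hrow : Submodule.span ℝ (Set.range Q) = Submodule.span ℝ (Set.range G)) :
    sval (Q * H) r ≥ sval (G * H) r / sval G 1 := by
  have hGQ : G * (Qᵀ * Q) = G := mul_transpose_mul_eq_self_of_span_le hQ hrow.ge
  have hdom : ∀ x, ‖(G * H).toEuclideanLin x‖ ≤ sval G 1 * ‖(Q * H).toEuclideanLin x‖ := by
    intro x
    calc ‖(G * H).toEuclideanLin x‖
        = ‖G.toEuclideanLin (Qᵀ.toEuclideanLin ((Q * H).toEuclideanLin x))‖ := by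
          conv_lhs => rw [← hGQ]
          simp [Matrix.mul_assoc]
      _ ≤ sval G 1 * ‖Qᵀ.toEuclideanLin ((Q * H).toEuclideanLin x)‖ :=
          norm_toEuclideanLin_le_sval_one G _
      _ = sval G 1 * ‖(Q * H).toEuclideanLin x‖ := by
          rw [norm_toEuclideanLin_transpose_of_mul_transpose_eq_one hQ]
  refine div_le_of_le_mul₀ (sval_nonneg G 1) (sval_nonneg _ _) ?_
  rw [mul_comm]
  exact sval_le_mul_of_norm_le (sval_nonneg G 1) hdom r

theorem least_singular_value_of_orthonormalized_product {r n l : ℕ}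
    (hrl : r < l) (hln : l < n)
    (G : Matrix (Fin r) (Fin n) ℝ) (H : Matrix (Fin n) (Fin l) ℝ)
    (hGH : (G * H).rank = r)
    (Q : Matrix (Fin r) (Fin n) ℝ) (hQ : Q * Qᵀ = 1)
    (hrow : Submodule.span ℝ (Set.range Q) = Submodule.span ℝ (Set.range G)) :
    sval (Q * H) r ≥ sval (G * H) r / sval G 1 :=
  least_singular_value_of_orthonormalized_product_general G H Q hQ hrow

end LRA
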